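/- Fix C > 0 and set B_c := 1+√(1+1/C). The function h(B) := 2f(BC) − BC·log(1+1/C) on (0,∞) attains its strict global maximum at B = B_c: for every B > 0 with B ≠ B_c, h(B) < h(B_c). -/

import Mathlib

open Real Filter Topology

/-- The function `f(x) = (x+1) log(x+1) - x log x` (note `Real.log 0 = 0`). -/
noncomputable def f (x : ℝ) : ℝ := (x + 1) * Real.log (x + 1) - x * Real.log x

/-- `g(X) = ∑_{i,j} f(X_{ij})`. -/
noncomputable def g {m n : ℕ} (X : Matrix (Fin m) (Fin n) ℝ) : ℝ :=
  ∑ i, ∑ j, f (X i j)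

/-- Contingency tables with row margins `a` and column margins `b`. -/
def contTables {m n : ℕ} (a : Fin m → ℕ) (b : Fin n → ℕ) :
    Set (Matrix (Fin m) (Fin n) ℕ) :=
  {X | (∀ i, ∑ j, X i j = a i) ∧ (∀ j, ∑ i, X i j = b j)}

/-- `T(a,b)`: the number of contingency tables with margins `(a,b)`. -/
noncomputable def T {m n : ℕ} (a : Fin m → ℕ) (b : Fin n → ℕ) : ℕ :=
  (contTables a b).ncard

/-- `G(a,b)`: the independence-heuristic estimate. -/
noncomputable def G {m n : ℕ} (a : Fin m → ℕ) (b : Fin n → ℕ) : ℝ :=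
  (((∑ i, a i) + m * n - 1).choose (m * n - 1) : ℝ)⁻¹ *
    (∏ i, (((a i) + n - 1).choose (n - 1) : ℝ)) *
    (∏ j, (((b j) + m - 1).choose (m - 1) : ℝ))

/-- The transportation polytope `P(a,b)` of real nonnegative matrices with the
given row and column sums. -/
def transPoly {m n : ℕ} (a : Fin m → ℕ) (b : Fin n → ℕ) :
    Set (Matrix (Fin m) (Fin n) ℝ) :=
  {X | (∀ i j, 0 ≤ X i j) ∧ (∀ i, ∑ j, X i j = a i) ∧ (∀ j, ∑ i, X i j = b j)}

/-- `Z` is a typical table for margins `(a,b)`: it maximizes `g` over `P(a,b)`. -/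
def IsTypical {m n : ℕ} (a : Fin m → ℕ) (b : Fin n → ℕ)
    (Z : Matrix (Fin m) (Fin n) ℝ) : Prop :=
  Z ∈ transPoly a b ∧ ∀ X ∈ transPoly a b, g X ≤ g Z

/-- `k = ⌊n^δ⌋`. -/
noncomputable def bk (n : ℕ) (δ : ℝ) : ℕ := ⌊(n : ℝ) ^ δ⌋₊

/-- Barvinok margins: `⌊n^δ⌋` entries equal to `⌊BCn⌋` followed by `n` entries
equal to `⌊Cn⌋`. -/
noncomputable def bMargin (n : ℕ) (δ B C : ℝ) : Fin (bk n δ + n) → ℕ :=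
  fun i => if (i : ℕ) < bk n δ then ⌊B * C * n⌋₊ else ⌊C * n⌋₊

/-- `T_{n,δ}(B,C)`. -/
noncomputable def Tnd (n : ℕ) (δ B C : ℝ) : ℕ :=
  T (bMargin n δ B C) (bMargin n δ B C)

/-- `G_{n,δ}(B,C)`. -/
noncomputable def Gnd (n : ℕ) (δ B C : ℝ) : ℝ :=
  G (bMargin n δ B C) (bMargin n δ B C)

/-! `f` is strictly concave on `(0, ∞)` with `f'(x) = log (1 + 1/x)`, so `x ↦ f x - x f'(a)` has
its strict maximum at `a`. With `a = B_c C` one has `1 + 1/a = √(1 + 1/C)`, hence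
`log (1 + 1/C) = 2 f'(a)` and `h(B) = 2 (f (B C) - B C f'(a))`. -/

open Set

lemma hasDerivAt_f {x : ℝ} (hx : 0 < x) : HasDerivAt f (log (1 + 1 / x)) x := by
  have hx1 : x + 1 ≠ 0 := by positivity
  have hshift := (hasDerivAt_id' x).add_const 1
  have hderiv : HasDerivAt f
      (1 * log (x + 1) + (x + 1) * (1 / (x + 1)) - (1 * log x + x * x⁻¹)) x :=
    (hshift.mul (hshift.log hx1)).sub ((hasDerivAt_id' x).mul (hasDerivAt_log hx.ne'))
  convert hderiv using 1
  rw [show 1 + 1 / x = (x + 1) / x by field_simp, log_div hx1 hx.ne']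
  field_simp
  ring

lemma strictAntiOn_log_one_add_one_div : StrictAntiOn (fun x : ℝ => log (1 + 1 / x)) (Ioi 0) :=
  fun _ _ y (hy : 0 < y) hxy => log_lt_log (by positivity) (by gcongr)

lemma strictConcaveOn_f : StrictConcaveOn ℝ (Ioi 0) f := by
  refine StrictAntiOn.strictConcaveOn_of_deriv (convex_Ioi 0)
    (fun x hx => (hasDerivAt_f hx).continuousAt.continuousWithinAt) ?_
  rw [interior_Ioi]
  exact strictAntiOn_log_one_add_one_div.congr fun x hx => (hasDerivAt_f hx).deriv.symm

lemma StrictConcaveOn.lt_add_mul_sub {S : Set ℝ} {φ : ℝ → ℝ} {φ' a x : ℝ}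
    (hφ : StrictConcaveOn ℝ S φ) (ha : a ∈ S) (hx : x ∈ S) (hxa : x ≠ a)
    (hderiv : HasDerivAt φ φ' a) : φ x < φ a + φ' * (x - a) := by
  rcases hxa.lt_or_gt with hlt | hgt
  · have hslope := hφ.lt_slope_of_hasDerivAt hx ha hlt hderiv
    rw [slope_def_field, lt_div_iff₀ (sub_pos.2 hlt)] at hslope
    linarith
  · have hslope := hφ.slope_lt_of_hasDerivAt ha hx hgt hderiv
    rw [slope_def_field, div_lt_iff₀ (sub_pos.2 hgt)] at hslope
    linarith

lemma f_sub_mul_log_lt {a x : ℝ} (ha : 0 < a) (hx : 0 < x) (hxa : x ≠ a) :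
    f x - x * log (1 + 1 / a) < f a - a * log (1 + 1 / a) := by
  have htangent := strictConcaveOn_f.lt_add_mul_sub ha hx hxa (hasDerivAt_f ha)
  linarith

lemma one_add_one_div_one_add_sqrt_mul {C : ℝ} (hC : 0 < C) :
    1 + 1 / ((1 + √(1 + 1 / C)) * C) = √(1 + 1 / C) := by
  -- `(√(1 + 1/C) - 1) (√(1 + 1/C) + 1) = 1/C`
  have hs := sq_sqrt (show (0 : ℝ) ≤ 1 + 1 / C by positivity)
  field_simp
  field_simp at hs
  nlinarith

/-- `h(B) = 2f(BC) − BC log(1+1/C)` attains its strict global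
maximum on `(0,∞)` at `B = B_c = 1 + √(1+1/C)`. -/
theorem statement17 (C Bc : ℝ) (hC : 0 < C)
    (hBc : Bc = 1 + Real.sqrt (1 + 1 / C)) :
    ∀ B : ℝ, 0 < B → B ≠ Bc →
      2 * f (B * C) - B * C * Real.log (1 + 1 / C)
        < 2 * f (Bc * C) - Bc * C * Real.log (1 + 1 / C) := by
  intro B hB hne
  have hBcC : 0 < Bc * C := by rw [hBc]; positivity
  have hlog : log (1 + 1 / C) = 2 * log (1 + 1 / (Bc * C)) := by
    rw [hBc, one_add_one_div_one_add_sqrt_mul hC, log_sqrt (by positivity)]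
    ring
  have hmax := f_sub_mul_log_lt hBcC (mul_pos hB hC) ((mul_left_injective₀ hC.ne').ne hne)
  rw [hlog]
  linarith
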